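/- arXiv:2601.13756 — 4 statements merged into one kernel-verified Lean document; each statement's English description precedes it below -/
import Mathlib

section
/- For every n ∈ ℕ with n ≥ 1, the problem of minimizing σ(B(λ)) over the feasible set Λ_n admits a minimizer, this minimizer is unique, and it satisfies the constraint with equality: (1/(n+1)) Σ_{i=0}^n λ̄_i = 1. -/
open Real

/-- The `(n+2) × (n+2)` symmetric tridiagonal matrix `B(λ)` with zero diagonal and
entries `λ_{j}^{-1/2}` on the sub/super-diagonals (0-based indexing: the entry in
positions `(i, i+1)` and `(i+1, i)` is `(l i)^{-1/2}` for `i = 0, …, n`). -/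
noncomputable def Bmat (n : ℕ) (l : Fin (n+1) → ℝ) :
    Matrix (Fin (n+2)) (Fin (n+2)) ℝ :=
  Matrix.of fun i j =>
    if h1 : (i : ℕ) + 1 = (j : ℕ) then
      l ⟨(i : ℕ), by have := j.isLt; omega⟩ ^ (-(1/2) : ℝ)
    else if h2 : (j : ℕ) + 1 = (i : ℕ) then
      l ⟨(j : ℕ), by have := i.isLt; omega⟩ ^ (-(1/2) : ℝ)
    else 0

/-- The largest eigenvalue (Perron root) of `B(λ)`. -/
noncomputable def sigmaB (n : ℕ) (l : Fin (n+1) → ℝ) : ℝ :=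
  sSup {μ : ℝ | ∃ v : Fin (n+2) → ℝ, v ≠ 0 ∧ (Bmat n l).mulVec v = μ • v}

/-- The feasible set `Λ_n`: all entries positive and `(1/(n+1)) ∑ λ_i ≤ 1`. -/
def Feasible (n : ℕ) (l : Fin (n+1) → ℝ) : Prop :=
  (∀ i, 0 < l i) ∧ (∑ i, l i) / ((n : ℝ) + 1) ≤ 1

/-- `λ̄` is a minimizer of `σ(B(·))` over `Λ_n`. -/
def IsMinimizer (n : ℕ) (l : Fin (n+1) → ℝ) : Prop :=
  Feasible n l ∧ ∀ m : Fin (n+1) → ℝ, Feasible n m → sigmaB n l ≤ sigmaB n m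

/-- A Perron vector of `B(λ)`: positive entries, Euclidean norm one,
eigenvector for the Perron root. -/
def IsPerronVector (n : ℕ) (l : Fin (n+1) → ℝ) (v : Fin (n+2) → ℝ) : Prop :=
  (∀ i, 0 < v i) ∧ (∑ i, v i ^ 2) = 1 ∧ (Bmat n l).mulVec v = sigmaB n l • v

/-!
`σ(B(λ))` is the largest eigenvalue of a real symmetric matrix, hence the maximum of
`v ↦ vᵀ B(λ) v` on the unit sphere; as `B(λ)` is entrywise nonnegative the maximum is attained
at a nonnegative eigenvector, which is positive because the path underlying `B(λ)` is connected.
Since `vᵀ B(λ) v = 2 ∑ₖ λₖ^(-1/2) vₖ vₖ₊₁`, `σ` is lower semicontinuous, satisfies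
`σ(λ) ≥ λₖ^(-1/2)` and `σ(tλ) = t^(-1/2) σ(λ)`: a minimizer exists on a compact part of `Λₙ`
away from the boundary, and it exhausts the budget. If `λ ≠ μ` were two minimizers, let `v` be
the Perron vector of their midpoint `p`; all `vₖ vₖ₊₁ > 0`, so strict convexity of `x ↦ x^(-1/2)`
gives `σ(p) = vᵀ B(p) v < (vᵀ B(λ) v + vᵀ B(μ) v) / 2 ≤ σ(λ)`.
-/

open Matrix
open scoped Pointwise Topology

namespace Matrix
variable {ι : Type*} [Fintype ι]

-- `sSup ∅ = 0` when `A` has no real eigenvalue; a symmetric `A` always has one.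
noncomputable def maxEigenvalue (A : Matrix ι ι ℝ) : ℝ :=
  sSup {μ | ∃ v, v ≠ 0 ∧ A *ᵥ v = μ • v}

lemma dotProduct_self_pos {v : ι → ℝ} (hv : v ≠ 0) : 0 < v ⬝ᵥ v := by
  simpa using dotProduct_star_self_pos_iff.mpr hv

lemma dotProduct_mulVec_of_mulVec_eq_smul {A : Matrix ι ι ℝ} {v : ι → ℝ} {μ : ℝ}
    (h : A *ᵥ v = μ • v) : v ⬝ᵥ A *ᵥ v = μ * (v ⬝ᵥ v) := by
  rw [h, dotProduct_smul, smul_eq_mul]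

lemma eq_zero_of_mulVec_eq_smul_of_nonneg {A : Matrix ι ι ℝ} (hA : ∀ i j, 0 ≤ A i j)
    {v : ι → ℝ} (hv : ∀ i, 0 ≤ v i) {μ : ℝ} (hAv : A *ᵥ v = μ • v) {i j : ι} (hvi : v i = 0)
    (hij : 0 < A i j) : v j = 0 := by
  have hrow : (A *ᵥ v) i = 0 := by simp [hAv, hvi]
  rw [mulVec, dotProduct,
    Finset.sum_eq_zero_iff_of_nonneg fun j _ => mul_nonneg (hA i j) (hv j)] at hrow
  exact (mul_eq_zero.mp (hrow j (Finset.mem_univ j))).resolve_left hij.ne'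

lemma maxEigenvalue_smul (A : Matrix ι ι ℝ) {c : ℝ} (hc : 0 < c) :
    (c • A).maxEigenvalue = c * A.maxEigenvalue := by
  have hset : {μ | ∃ v, v ≠ 0 ∧ (c • A) *ᵥ v = μ • v} =
      c • ({μ | ∃ v, v ≠ 0 ∧ A *ᵥ v = μ • v} : Set ℝ) := by
    ext μ
    simp only [Set.mem_smul_set, smul_mulVec, smul_eq_mul]
    constructor
    · rintro ⟨v, hv, hAv⟩
      refine ⟨μ / c, ⟨v, hv, ?_⟩, by field_simp⟩
      rw [div_eq_inv_mul, mul_smul, ← hAv, smul_smul, inv_mul_cancel₀ hc.ne', one_smul]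
    · rintro ⟨ν, ⟨v, hv, hAv⟩, rfl⟩
      exact ⟨v, hv, by rw [hAv, smul_smul]⟩
  rw [maxEigenvalue, hset, Real.sSup_smul_of_nonneg hc.le, smul_eq_mul, maxEigenvalue]

variable [DecidableEq ι] {A : Matrix ι ι ℝ}

theorem IsHermitian.exists_unit_eigenvector_forall_dotProduct_mulVec_le [Nonempty ι]
    (hA : A.IsHermitian) :
    ∃ μ, (∃ v, v ⬝ᵥ v = 1 ∧ A *ᵥ v = μ • v) ∧ ∀ v, v ⬝ᵥ A *ᵥ v ≤ μ * (v ⬝ᵥ v) := by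
  set T := toEuclideanLin A
  have hT : T.IsSymmetric := isSymmetric_toEuclideanLin_iff.mpr hA
  have quad (x : EuclideanSpace ℝ ι) : inner ℝ (T x) x = x.ofLp ⬝ᵥ A *ᵥ x.ofLp := rfl
  have norm_sq (x : EuclideanSpace ℝ ι) : ‖x‖ ^ 2 = x.ofLp ⬝ᵥ x.ofLp := by
    rw [← real_inner_self_eq_norm_sq]; rfl
  set μ := ⨆ x : {x : EuclideanSpace ℝ ι // x ≠ 0},
    RCLike.re (inner ℝ (T x) (x : EuclideanSpace ℝ ι)) / ‖(x : EuclideanSpace ℝ ι)‖ ^ 2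
  obtain ⟨x, hx, hx0⟩ := hT.hasEigenvalue_iSup_of_finiteDimensional.exists_hasEigenvector
  have hunit : (‖x‖⁻¹ • x).ofLp ⬝ᵥ (‖x‖⁻¹ • x).ofLp = 1 := by
    rw [← norm_sq, norm_smul, norm_inv, norm_norm, inv_mul_cancel₀ (norm_ne_zero_iff.mpr hx0),
      one_pow]
  refine ⟨μ, ⟨_, hunit, ?_⟩, fun v => ?_⟩
  · exact congrArg WithLp.ofLp
      (Module.End.mem_eigenspace_iff.mp (Submodule.smul_mem _ ‖x‖⁻¹ hx))
  rcases eq_or_ne v 0 with rfl | hv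
  · simp
  have bdd : BddAbove (Set.range fun x : {x : EuclideanSpace ℝ ι // x ≠ 0} =>
      RCLike.re (inner ℝ (T x) (x : EuclideanSpace ℝ ι)) / ‖(x : EuclideanSpace ℝ ι)‖ ^ 2) := by
    refine ⟨‖LinearMap.toContinuousLinearMap T‖, ?_⟩
    rintro _ ⟨x, rfl⟩
    exact (le_abs_self _).trans ((LinearMap.toContinuousLinearMap T).rayleighQuotient_le_norm x)
  have h : _ ≤ μ := le_ciSup bdd ⟨WithLp.toLp 2 v, by simpa using hv⟩
  rwa [RCLike.re_to_real, quad, norm_sq, div_le_iff₀ (dotProduct_self_pos hv)] at h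

variable [Nonempty ι]

theorem IsHermitian.maxEigenvalue_spec (hA : A.IsHermitian) :
    (∃ v, v ⬝ᵥ v = 1 ∧ A *ᵥ v = A.maxEigenvalue • v) ∧
      ∀ v, v ⬝ᵥ A *ᵥ v ≤ A.maxEigenvalue * (v ⬝ᵥ v) := by
  obtain ⟨μ, ⟨v, hv1, hAv⟩, hle⟩ := hA.exists_unit_eigenvector_forall_dotProduct_mulVec_le
  suffices A.maxEigenvalue = μ by rw [this]; exact ⟨⟨v, hv1, hAv⟩, hle⟩
  refine IsGreatest.csSup_eq ⟨⟨v, fun h => by simp [h] at hv1, hAv⟩, ?_⟩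
  rintro ν ⟨w, hw, hAw⟩
  have := hle w
  rw [dotProduct_mulVec_of_mulVec_eq_smul hAw] at this
  exact le_of_mul_le_mul_right this (dotProduct_self_pos hw)

theorem IsHermitian.exists_mulVec_eq_maxEigenvalue_smul (hA : A.IsHermitian) :
    ∃ v, v ⬝ᵥ v = 1 ∧ A *ᵥ v = A.maxEigenvalue • v :=
  hA.maxEigenvalue_spec.1

theorem IsHermitian.dotProduct_mulVec_le (hA : A.IsHermitian) (v : ι → ℝ) :
    v ⬝ᵥ A *ᵥ v ≤ A.maxEigenvalue * (v ⬝ᵥ v) :=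
  hA.maxEigenvalue_spec.2 v

theorem IsHermitian.mulVec_eq_of_dotProduct_mulVec_eq (hA : A.IsHermitian) {v : ι → ℝ}
    (hv : v ⬝ᵥ A *ᵥ v = A.maxEigenvalue * (v ⬝ᵥ v)) : A *ᵥ v = A.maxEigenvalue • v := by
  have hpsd : (A.maxEigenvalue • 1 - A).PosSemidef := by
    refine .of_dotProduct_mulVec_nonneg ?_ fun x => ?_
    · exact (isHermitian_one.smul (IsSelfAdjoint.all _)).sub hA
    · simpa [sub_mulVec, smul_mulVec, dotProduct_smul] using hA.dotProduct_mulVec_le x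
  have := (hpsd.dotProduct_mulVec_zero_iff v).mp
    (by simp [sub_mulVec, smul_mulVec, dotProduct_smul, hv])
  rw [sub_mulVec, smul_mulVec, one_mulVec, sub_eq_zero] at this
  exact this.symm

theorem IsHermitian.exists_nonneg_mulVec_eq_maxEigenvalue_smul (hA : A.IsHermitian)
    (hA0 : ∀ i j, 0 ≤ A i j) :
    ∃ v, (∀ i, 0 ≤ v i) ∧ v ⬝ᵥ v = 1 ∧ A *ᵥ v = A.maxEigenvalue • v := by
  obtain ⟨v, hv1, hAv⟩ := hA.exists_mulVec_eq_maxEigenvalue_smul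
  set w : ι → ℝ := fun i => |v i|
  have hw1 : w ⬝ᵥ w = 1 := by simpa [w, dotProduct] using hv1
  have hvw : v ⬝ᵥ A *ᵥ v ≤ w ⬝ᵥ A *ᵥ w := by
    simp only [dotProduct, mulVec, Finset.mul_sum]
    refine Finset.sum_le_sum fun i _ => Finset.sum_le_sum fun j _ => ?_
    calc v i * (A i j * v j) ≤ |v i * (A i j * v j)| := le_abs_self _
      _ = w i * (A i j * w j) := by rw [abs_mul, abs_mul, abs_of_nonneg (hA0 i j)]
  refine ⟨w, fun i => abs_nonneg _, hw1, hA.mulVec_eq_of_dotProduct_mulVec_eq ?_⟩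
  refine le_antisymm (hA.dotProduct_mulVec_le w) ?_
  rw [hw1, ← hv1, ← dotProduct_mulVec_of_mulVec_eq_smul hAv]
  exact hvw

theorem lowerSemicontinuousAt_maxEigenvalue {X : Type*} [TopologicalSpace X]
    {F : X → Matrix ι ι ℝ} (hF : ∀ x, (F x).IsHermitian) {x : X} (hFx : ContinuousAt F x) :
    LowerSemicontinuousAt (fun y => (F y).maxEigenvalue) x := by
  intro c hc
  obtain ⟨v, hv1, hFv⟩ := (hF x).exists_mulVec_eq_maxEigenvalue_smul
  have hquad : ContinuousAt (fun y => v ⬝ᵥ F y *ᵥ v) x := by fun_prop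
  have hcx : c < v ⬝ᵥ F x *ᵥ v := by
    rwa [dotProduct_mulVec_of_mulVec_eq_smul hFv, hv1, mul_one]
  filter_upwards [hquad.eventually (lt_mem_nhds hcx)] with y hy
  simpa [hv1] using hy.trans_le ((hF y).dotProduct_mulVec_le v)

end Matrix

theorem Fin.iff_of_forall_castSucc_iff_succ {n : ℕ} {P : Fin (n+1) → Prop}
    (h : ∀ k : Fin n, P k.castSucc ↔ P k.succ) (i j : Fin (n+1)) : P i ↔ P j := by
  have key : ∀ i, P i ↔ P 0 := Fin.induction Iff.rfl fun k ih => (h k).symm.trans ih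
  exact (key i).trans (key j).symm

theorem rpow_neg_half_midpoint_lt {x y : ℝ} (hx : 0 < x) (hy : 0 < y) (hxy : x ≠ y) :
    ((x + y) / 2) ^ (-(1/2) : ℝ) < (x ^ (-(1/2) : ℝ) + y ^ (-(1/2) : ℝ)) / 2 := by
  have inv_sqrt {z : ℝ} (hz : 0 ≤ z) : z ^ (-(1/2) : ℝ) = (√z)⁻¹ := by
    rw [Real.rpow_neg hz, Real.sqrt_eq_rpow]
  rw [inv_sqrt (by positivity), inv_sqrt hx.le, inv_sqrt hy.le]
  -- With `x = s²`, `y = t²` this is the strict harmonic–quadratic mean inequality for `s ≠ t`.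
  obtain ⟨s, hs, rfl⟩ : ∃ s, 0 < s ∧ s ^ 2 = x := ⟨√x, by positivity, Real.sq_sqrt hx.le⟩
  obtain ⟨t, ht, rfl⟩ : ∃ t, 0 < t ∧ t ^ 2 = y := ⟨√y, by positivity, Real.sq_sqrt hy.le⟩
  have hst : 0 < (s - t) ^ 2 := by
    have : s - t ≠ 0 := sub_ne_zero.mpr fun h => hxy (by rw [h])
    positivity
  rw [Real.sqrt_sq hs.le, Real.sqrt_sq ht.le]
  set q := √((s ^ 2 + t ^ 2) / 2)
  have hq : 0 < q := by positivity
  have hq2 : q ^ 2 = (s ^ 2 + t ^ 2) / 2 := Real.sq_sqrt (by positivity)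
  -- `(q (s + t))² = (s² + t²) (s + t)² / 2 > 2 s t · 4 s t`
  have : 2 * (s * t) < q * (s + t) := by
    nlinarith [sq_nonneg (q * (s + t) - 2 * s * t), mul_pos hs ht, mul_pos hq (add_pos hs ht)]
  rw [inv_lt_iff_one_lt_mul₀ hq]
  field_simp
  nlinarith

section Bmat
variable {n : ℕ}

lemma Bmat_apply_castSucc_succ (l : Fin (n+1) → ℝ) (k : Fin (n+1)) :
    Bmat n l k.castSucc k.succ = l k ^ (-(1/2) : ℝ) := by
  simp [Bmat]

lemma Bmat_apply_succ_castSucc (l : Fin (n+1) → ℝ) (k : Fin (n+1)) :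
    Bmat n l k.succ k.castSucc = l k ^ (-(1/2) : ℝ) := by
  simp only [Bmat, of_apply, Fin.val_succ, Fin.val_castSucc,
    dif_neg (by omega : (k : ℕ) + 1 + 1 ≠ k)]
  simp

lemma Bmat_apply_self (l : Fin (n+1) → ℝ) (i : Fin (n+2)) : Bmat n l i i = 0 := by
  simp [Bmat]

lemma Bmat_isHermitian (l : Fin (n+1) → ℝ) : (Bmat n l).IsHermitian := by
  ext i j
  simp only [conjTranspose_apply, star_trivial, Bmat, of_apply]
  split_ifs <;> first | omega | rfl

lemma Bmat_nonneg {l : Fin (n+1) → ℝ} (hl : ∀ i, 0 ≤ l i) (i j : Fin (n+2)) :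
    0 ≤ Bmat n l i j := by
  simp only [Bmat, of_apply]
  split_ifs <;> first | exact Real.rpow_nonneg (hl _) _ | rfl

lemma Bmat_smul {l : Fin (n+1) → ℝ} (hl : ∀ i, 0 ≤ l i) {t : ℝ} (ht : 0 ≤ t) :
    Bmat n (t • l) = t ^ (-(1/2) : ℝ) • Bmat n l := by
  ext i j
  rw [Matrix.smul_apply]
  simp only [Bmat, of_apply, Pi.smul_apply, smul_eq_mul]
  split_ifs <;> simp [Real.mul_rpow ht (hl _)]

lemma continuousAt_Bmat {l : Fin (n+1) → ℝ} (hl : ∀ i, 0 < l i) : ContinuousAt (Bmat n) l := by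
  refine continuousAt_pi.2 fun i => continuousAt_pi.2 fun j => ?_
  simp only [Bmat, of_apply]
  split_ifs
  all_goals first
    | exact (continuous_apply _).continuousAt.rpow_const (Or.inl (hl _).ne')
    | exact continuousAt_const

lemma dotProduct_mulVec_Bmat (l : Fin (n+1) → ℝ) (v : Fin (n+2) → ℝ) :
    v ⬝ᵥ Bmat n l *ᵥ v = 2 * ∑ k, l k ^ (-(1/2) : ℝ) * (v k.castSucc * v k.succ) := by
  set U : Matrix (Fin (n+2)) (Fin (n+2)) ℝ := of fun i j =>
    if h : (i : ℕ) + 1 = j then l ⟨i, by omega⟩ ^ (-(1/2) : ℝ) else 0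
  have hB : Bmat n l = U + Uᵀ := by
    ext i j
    simp only [Bmat, U, Matrix.add_apply, transpose_apply, of_apply]
    split_ifs <;> first | omega | simp
  have hU : v ⬝ᵥ U *ᵥ v = ∑ k, l k ^ (-(1/2) : ℝ) * (v k.castSucc * v k.succ) := by
    have succ_iff (k : Fin (n+1)) (j : Fin (n+2)) : (k : ℕ) + 1 = j ↔ j = k.succ := by
      rw [Fin.ext_iff, Fin.val_succ]; omega
    have last_ne (j : Fin (n+2)) : n + 1 + 1 ≠ (j : ℕ) := by omega
    rw [dotProduct, Fin.sum_univ_castSucc]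
    simp [mulVec, dotProduct, U, succ_iff, last_ne, mul_left_comm]
  rw [hB, add_mulVec, dotProduct_add, dotProduct_mulVec v Uᵀ, vecMul_transpose,
    dotProduct_comm (U *ᵥ v), hU]
  ring

lemma dotProduct_mulVec_Bmat_midpoint_lt {l m : Fin (n+1) → ℝ} (hl : ∀ i, 0 < l i)
    (hm : ∀ i, 0 < m i) (hne : l ≠ m) {v : Fin (n+2) → ℝ} (hv : ∀ i, 0 < v i) :
    v ⬝ᵥ Bmat n (fun i => (l i + m i) / 2) *ᵥ v <
      (v ⬝ᵥ Bmat n l *ᵥ v + v ⬝ᵥ Bmat n m *ᵥ v) / 2 := by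
  obtain ⟨k, hk⟩ := Function.ne_iff.mp hne
  have hw (i : Fin (n+1)) : 0 < v i.castSucc * v i.succ := mul_pos (hv _) (hv _)
  have hconv : ∑ i, ((l i + m i) / 2) ^ (-(1/2) : ℝ) * (v i.castSucc * v i.succ) <
      ∑ i, (l i ^ (-(1/2) : ℝ) + m i ^ (-(1/2) : ℝ)) / 2 * (v i.castSucc * v i.succ) := by
    refine Finset.sum_lt_sum (fun i _ => ?_) ⟨k, Finset.mem_univ k, ?_⟩
    · refine mul_le_mul_of_nonneg_right ?_ (hw i).le
      rcases eq_or_ne (l i) (m i) with h | h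
      · simp [h]
      · exact (rpow_neg_half_midpoint_lt (hl i) (hm i) h).le
    · exact mul_lt_mul_of_pos_right (rpow_neg_half_midpoint_lt (hl k) (hm k) hk) (hw k)
  simp only [dotProduct_mulVec_Bmat, add_div, add_mul, Finset.sum_add_distrib,
    div_mul_eq_mul_div, ← Finset.sum_div] at hconv ⊢
  linarith

end Bmat

section sigmaB
variable {n : ℕ}

lemma sigmaB_eq_maxEigenvalue (l : Fin (n+1) → ℝ) : sigmaB n l = (Bmat n l).maxEigenvalue := rfl

lemma dotProduct_mulVec_Bmat_le (l : Fin (n+1) → ℝ) (v : Fin (n+2) → ℝ) :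
    v ⬝ᵥ Bmat n l *ᵥ v ≤ sigmaB n l * (v ⬝ᵥ v) :=
  (Bmat_isHermitian l).dotProduct_mulVec_le v

lemma rpow_neg_half_le_sigmaB (l : Fin (n+1) → ℝ) (k : Fin (n+1)) :
    l k ^ (-(1/2) : ℝ) ≤ sigmaB n l := by
  set v : Fin (n+2) → ℝ := Pi.single k.castSucc 1 + Pi.single k.succ 1
  have hne : k.castSucc ≠ k.succ := Fin.castSucc_lt_succ.ne
  have hvv : v ⬝ᵥ v = 2 := by simp [v, hne, hne.symm]; norm_num
  have hquad : v ⬝ᵥ Bmat n l *ᵥ v = 2 * l k ^ (-(1/2) : ℝ) := by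
    simp [v, mulVec_add, dotProduct_add, add_dotProduct, Bmat_apply_castSucc_succ,
      Bmat_apply_succ_castSucc, Bmat_apply_self]
    ring
  have := dotProduct_mulVec_Bmat_le l v
  rw [hquad, hvv] at this
  linarith

lemma sigmaB_pos {l : Fin (n+1) → ℝ} (hl : ∀ i, 0 < l i) : 0 < sigmaB n l :=
  (Real.rpow_pos_of_pos (hl 0) _).trans_le (rpow_neg_half_le_sigmaB l 0)

lemma sigmaB_smul {l : Fin (n+1) → ℝ} (hl : ∀ i, 0 ≤ l i) {t : ℝ} (ht : 0 < t) :
    sigmaB n (t • l) = t ^ (-(1/2) : ℝ) * sigmaB n l := by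
  rw [sigmaB_eq_maxEigenvalue, Bmat_smul hl ht.le, maxEigenvalue_smul _ (by positivity),
    sigmaB_eq_maxEigenvalue]

lemma lowerSemicontinuousAt_sigmaB {l : Fin (n+1) → ℝ} (hl : ∀ i, 0 < l i) :
    LowerSemicontinuousAt (sigmaB n) l :=
  lowerSemicontinuousAt_maxEigenvalue Bmat_isHermitian (continuousAt_Bmat hl)

lemma exists_isPerronVector {l : Fin (n+1) → ℝ} (hl : ∀ i, 0 < l i) :
    ∃ v, IsPerronVector n l v := by
  have hB0 := Bmat_nonneg fun i => (hl i).le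
  obtain ⟨v, hv0, hv1, hBv⟩ :=
    (Bmat_isHermitian l).exists_nonneg_mulVec_eq_maxEigenvalue_smul hB0
  have hzero (k : Fin (n+1)) : v k.castSucc = 0 ↔ v k.succ = 0 := by
    have hpos := Real.rpow_pos_of_pos (hl k) (-(1/2))
    exact ⟨fun h => eq_zero_of_mulVec_eq_smul_of_nonneg hB0 hv0 hBv h
        (by rwa [Bmat_apply_castSucc_succ]),
      fun h => eq_zero_of_mulVec_eq_smul_of_nonneg hB0 hv0 hBv h
        (by rwa [Bmat_apply_succ_castSucc])⟩
  have hne (i : Fin (n+2)) : v i ≠ 0 := fun hi => by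
    have : v = 0 := funext fun j =>
      (Fin.iff_of_forall_castSucc_iff_succ (P := (v · = 0)) hzero i j).mp hi
    simp [this] at hv1
  exact ⟨v, fun i => (hv0 i).lt_of_ne' (hne i), by simpa [dotProduct, sq] using hv1, hBv⟩

end sigmaB

lemma isCompact_setOf_forall_le_sum_le {ι : Type*} [Fintype ι] {δ : ℝ} (hδ : 0 ≤ δ) (c : ℝ) :
    IsCompact {l : ι → ℝ | (∀ i, δ ≤ l i) ∧ ∑ i, l i ≤ c} := by
  refine (isCompact_univ_pi fun _ => isCompact_Icc (a := δ) (b := c)).of_isClosed_subset ?_ ?_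
  · simp only [Set.ofPred_and, Set.ofPred_forall]
    exact (isClosed_iInter fun i => isClosed_le continuous_const (continuous_apply i)).inter
      (isClosed_le (by fun_prop) continuous_const)
  · rintro l ⟨hδl, hc⟩ i -
    exact ⟨hδl i,
      (Finset.single_le_sum (fun j _ => hδ.trans (hδl j)) (Finset.mem_univ i)).trans hc⟩

lemma exists_lt_rpow_neg_half (s : ℝ) : ∃ δ, 0 < δ ∧ δ ≤ 1 ∧ s < δ ^ (-(1/2) : ℝ) := by
  have hs : ∀ᶠ x in 𝓝[>] (0 : ℝ), s < x ^ (-(1/2) : ℝ) :=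
    (tendsto_rpow_neg_nhdsGT_zero (by norm_num)).eventually_gt_atTop s
  have h1 : ∀ᶠ x in 𝓝[>] (0 : ℝ), x ≤ 1 :=
    (eventually_le_nhds zero_lt_one).filter_mono nhdsWithin_le_nhds
  obtain ⟨δ, hδ0, hδ1, hδs⟩ := (eventually_mem_nhdsWithin.and (h1.and hs)).exists
  exact ⟨δ, hδ0, hδ1, hδs⟩

section minimizer
variable {n : ℕ}

lemma feasible_iff {l : Fin (n+1) → ℝ} : Feasible n l ↔ (∀ i, 0 < l i) ∧ ∑ i, l i ≤ n + 1 := by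
  rw [Feasible, div_le_one (by positivity)]

theorem exists_isMinimizer (n : ℕ) : ∃ l, IsMinimizer n l := by
  obtain ⟨δ, hδ0, hδ1, hδ⟩ := exists_lt_rpow_neg_half (sigmaB n 1)
  set K := {l : Fin (n+1) → ℝ | (∀ i, δ ≤ l i) ∧ ∑ i, l i ≤ n + 1}
  have hKpos (l) (hl : l ∈ K) (i) : 0 < l i := hδ0.trans_le (hl.1 i)
  have hone : (1 : Fin (n+1) → ℝ) ∈ K := ⟨fun _ => hδ1, by simp⟩
  obtain ⟨l, hlK, hmin⟩ := LowerSemicontinuousOn.exists_isMinOn ⟨1, hone⟩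
    (isCompact_setOf_forall_le_sum_le hδ0.le _)
    fun l hl => (lowerSemicontinuousAt_sigmaB (hKpos l hl)).lowerSemicontinuousWithinAt K
  refine ⟨l, feasible_iff.2 ⟨hKpos l hlK, hlK.2⟩, fun m hm => ?_⟩
  rw [feasible_iff] at hm
  by_cases hδm : ∀ i, δ ≤ m i
  · exact hmin ⟨hδm, hm.2⟩
  obtain ⟨i, hi⟩ := not_forall.mp hδm
  calc sigmaB n l ≤ sigmaB n 1 := hmin hone
    _ ≤ δ ^ (-(1/2) : ℝ) := hδ.le
    _ ≤ m i ^ (-(1/2) : ℝ) :=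
      Real.rpow_le_rpow_of_nonpos (hm.1 i) (not_le.mp hi).le (by norm_num)
    _ ≤ sigmaB n m := rpow_neg_half_le_sigmaB m i

theorem IsMinimizer.sum_eq {l : Fin (n+1) → ℝ} (h : IsMinimizer n l) : ∑ i, l i = n + 1 := by
  obtain ⟨hpos, hsum⟩ := feasible_iff.1 h.1
  by_contra hne
  have hS : 0 < ∑ i, l i := Finset.sum_pos (fun i _ => hpos i) Finset.univ_nonempty
  set t := (n + 1 : ℝ) / ∑ i, l i
  have ht : 1 < t := (one_lt_div hS).2 (lt_of_le_of_ne hsum hne)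
  have htl : Feasible n (t • l) := feasible_iff.2
    ⟨fun i => mul_pos (by linarith) (hpos i),
      by simp only [Pi.smul_apply, smul_eq_mul, ← Finset.mul_sum, t, div_mul_cancel₀ _ hS.ne',
        le_refl]⟩
  have hle := h.2 _ htl
  rw [sigmaB_smul (fun i => (hpos i).le) (by linarith)] at hle
  have hlt : t ^ (-(1/2) : ℝ) < 1 := Real.rpow_lt_one_of_one_lt_of_neg ht (by norm_num)
  nlinarith [sigmaB_pos hpos]

theorem IsMinimizer.eq {l m : Fin (n+1) → ℝ} (hl : IsMinimizer n l) (hm : IsMinimizer n m) :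
    l = m := by
  by_contra hne
  obtain ⟨hlpos, hlsum⟩ := feasible_iff.1 hl.1
  obtain ⟨hmpos, hmsum⟩ := feasible_iff.1 hm.1
  set p : Fin (n+1) → ℝ := fun i => (l i + m i) / 2
  have hppos (i) : 0 < p i := by have := hlpos i; have := hmpos i; positivity
  have hp : Feasible n p := feasible_iff.2 ⟨hppos, by
    simp only [p, ← Finset.sum_div, Finset.sum_add_distrib]; linarith⟩
  obtain ⟨v, hvpos, hv1, hpv⟩ := exists_isPerronVector hppos
  have hvv : v ⬝ᵥ v = 1 := by simpa [dotProduct, sq] using hv1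
  have hσp : v ⬝ᵥ Bmat n p *ᵥ v = sigmaB n p := by
    rw [dotProduct_mulVec_of_mulVec_eq_smul hpv, hvv, mul_one]
  have hσl : v ⬝ᵥ Bmat n l *ᵥ v ≤ sigmaB n l := by
    simpa [hvv] using dotProduct_mulVec_Bmat_le l v
  have hσm : v ⬝ᵥ Bmat n m *ᵥ v ≤ sigmaB n m := by
    simpa [hvv] using dotProduct_mulVec_Bmat_le m v
  linarith [dotProduct_mulVec_Bmat_midpoint_lt hlpos hmpos hne hvpos, hl.2 p hp,
    le_antisymm (hl.2 m hm.1) (hm.2 l hl.1)]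

end minimizer

theorem stmt_0_general (n : ℕ) :
    (∃! l : Fin (n+1) → ℝ, IsMinimizer n l) ∧
    (∀ l : Fin (n+1) → ℝ, IsMinimizer n l →
      (∑ i, l i) / ((n : ℝ) + 1) = 1) := by
  obtain ⟨l, hl⟩ := exists_isMinimizer n
  exact ⟨⟨l, hl, fun m hm => hm.eq hl⟩,
    fun m hm => by rw [hm.sum_eq, div_self (by positivity)]⟩

/-- existence and uniqueness of the minimizer, which moreover
satisfies the budget constraint with equality. -/
theorem stmt_0 (n : ℕ) (hn : 1 ≤ n) :
    (∃! l : Fin (n+1) → ℝ, IsMinimizer n l) ∧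
    (∀ l : Fin (n+1) → ℝ, IsMinimizer n l →
      (∑ i, l i) / ((n : ℝ) + 1) = 1) :=
  stmt_0_general n
end

section
/- Let n ∈ ℕ with n ≥ 1, let λ̄ be a minimizer of σ(B(·)) over Λ_n with σ̄ = σ(B(λ̄)), and let v̄ be a Perron vector of B(λ̄). Then the quantities μ̄_i := v̄_{i+1} v̄_{i+2} λ̄_i^{−3/2}, i = 0,…,n, are all equal; moreover their common value is σ̄ v̄_1² / λ̄_0. -/
/-!
Perturb a minimizer `λ` to `λ + t δ` with `∑ δ ≤ 0`, `t > 0`. The expected first-order change of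
the Perron root is `d = vᵀ B' v = -∑ δ_i μ_i`, where `B'` is the derivative of `B(λ + t δ)` at
`t = 0`. To avoid eigenvalue perturbation theory, solve `(B - σ) u = d v - B' v` (its right side is
orthogonal to `v`, and a tridiagonal system can be solved row by row); the Collatz–Wielandt bound
for the positive test vector `v + t u` then gives `σ(B(λ + t δ)) ≤ σ + t d + o(t)`. Minimality
forces `d ≥ 0`, i.e. `∑ δ_i μ_i ≤ 0` whenever `∑ δ_i ≤ 0`, so all `μ_i` (`perronWeight`) are
equal, and the first row of `B v = σ v` evaluates `μ_0`.
-/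

open Real

open Matrix Filter Topology

section Tridiagonal

def tridiag {R : Type*} [Zero R] (n : ℕ) (b : Fin (n+1) → R) :
    Matrix (Fin (n+2)) (Fin (n+2)) R :=
  of fun i j =>
    if h1 : (i : ℕ) + 1 = (j : ℕ) then b ⟨i, by have := j.isLt; omega⟩
    else if h2 : (j : ℕ) + 1 = (i : ℕ) then b ⟨j, by have := i.isLt; omega⟩
    else 0

variable {R : Type*} [CommSemiring R] {n : ℕ}

theorem tridiag_eq_sum (b : Fin (n+1) → R) :
    tridiag n b = ∑ k, (single k.castSucc k.succ (b k) + single k.succ k.castSucc (b k)) := by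
  ext i j
  rw [Matrix.sum_apply]
  simp only [Matrix.add_apply, single_apply, tridiag, of_apply, Fin.ext_iff, Fin.val_castSucc,
    Fin.val_succ]
  split_ifs with h1 h2
  · rw [Fintype.sum_eq_single ⟨i, by omega⟩]
    · rw [if_pos ⟨rfl, h1⟩, if_neg (by omega), add_zero]
    · intro k hk
      have hk : (k : ℕ) ≠ i := fun h => hk (Fin.ext h)
      rw [if_neg (by omega), if_neg (by omega), add_zero]
  · rw [Fintype.sum_eq_single ⟨j, by omega⟩]
    · rw [if_neg (by omega), if_pos ⟨h2, rfl⟩, zero_add]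
    · intro k hk
      have hk : (k : ℕ) ≠ j := fun h => hk (Fin.ext h)
      rw [if_neg (by omega), if_neg (by omega), add_zero]
  · refine (Finset.sum_eq_zero fun k _ => ?_).symm
    rw [if_neg (by omega), if_neg (by omega), add_zero]

theorem tridiag_mulVec (b : Fin (n+1) → R) (x : Fin (n+2) → R) :
    tridiag n b *ᵥ x =
      ∑ k, (Pi.single k.castSucc (b k * x k.succ) + Pi.single k.succ (b k * x k.castSucc)) := by
  simp only [tridiag_eq_sum, sum_mulVec, add_mulVec, single_mulVec]
  rfl

theorem tridiag_mulVec_zero (b : Fin (n+1) → R) (x : Fin (n+2) → R) :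
    (tridiag n b *ᵥ x) 0 = b 0 * x 1 := by
  simp only [tridiag_mulVec, Finset.sum_apply, Pi.add_apply, Pi.single_apply, ← Fin.castSucc_zero,
    Fin.castSucc_inj, Finset.sum_add_distrib, Finset.sum_ite_eq, Finset.mem_univ, if_true]
  rw [Finset.sum_eq_zero fun k _ => if_neg (by simp [eq_comm]), add_zero, Fin.succ_zero_eq_one]

theorem tridiag_mulVec_succ_castSucc (b : Fin (n+1) → R) (x : Fin (n+2) → R) (j : Fin n) :
    (tridiag n b *ᵥ x) j.succ.castSucc =
      b j.succ * x j.succ.succ + b j.castSucc * x j.castSucc.castSucc := by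
  simp only [tridiag_mulVec, Finset.sum_apply, Pi.add_apply, Pi.single_apply,
    Finset.sum_add_distrib, Fin.castSucc_inj]
  simp only [← Fin.succ_castSucc, Fin.succ_inj, Finset.sum_ite_eq, Finset.mem_univ, if_true]

theorem dotProduct_tridiag_mulVec (b : Fin (n+1) → R) (x y : Fin (n+2) → R) :
    x ⬝ᵥ tridiag n b *ᵥ y = ∑ k, b k * (x k.castSucc * y k.succ + x k.succ * y k.castSucc) := by
  simp only [tridiag_mulVec, dotProduct_sum, dotProduct_add, dotProduct_single]
  exact Finset.sum_congr rfl fun k _ => by ring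

theorem tridiag_transpose (b : Fin (n+1) → R) : (tridiag n b)ᵀ = tridiag n b := by
  ext i j
  simp only [tridiag, transpose_apply, of_apply]
  split_ifs <;> first | rfl | omega

theorem tridiag_nonneg {b : Fin (n+1) → ℝ} (hb : ∀ j, 0 ≤ b j) (i k : Fin (n+2)) :
    0 ≤ tridiag n b i k := by
  simp only [tridiag, of_apply]
  split_ifs <;> first | exact hb _ | exact le_rfl

theorem hasDerivAt_tridiag_apply {b : ℝ → Fin (n+1) → ℝ} {c : Fin (n+1) → ℝ} {t₀ : ℝ}
    (hb : ∀ j, HasDerivAt (fun t => b t j) (c j) t₀) (i k : Fin (n+2)) :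
    HasDerivAt (fun t => tridiag n (b t) i k) (tridiag n c i k) t₀ := by
  simp only [tridiag, of_apply]
  split_ifs
  exacts [hb _, hb _, hasDerivAt_const _ _]

end Tridiagonal

section ForwardSolve

variable {K : Type*} [Field K]

def forwardSolve (σ : K) (b r : ℕ → K) : ℕ → K
  | 0 => 0
  | 1 => r 0 / b 0
  | k + 2 => (r (k + 1) + σ * forwardSolve σ b r (k + 1) - b k * forwardSolve σ b r k) / b (k + 1)

theorem exists_tridiag_mulVec_sub_smul_eq {n : ℕ} {b : Fin (n+1) → K} {σ : K}
    {v r : Fin (n+2) → K} (hb : ∀ j, b j ≠ 0) (hv : tridiag n b *ᵥ v = σ • v)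
    (hv_last : v (Fin.last _) ≠ 0) (hr : v ⬝ᵥ r = 0) :
    ∃ u, tridiag n b *ᵥ u - σ • u = r := by
  have hB (k : ℕ) (hk : k < n + 1) : Function.extend Fin.val b 0 k = b ⟨k, hk⟩ :=
    Fin.val_injective.extend_apply b 0 ⟨k, hk⟩
  have hR (k : ℕ) (hk : k < n + 2) : Function.extend Fin.val r 0 k = r ⟨k, hk⟩ :=
    Fin.val_injective.extend_apply r 0 ⟨k, hk⟩
  set U := forwardSolve σ (Function.extend Fin.val b 0) (Function.extend Fin.val r 0)
  set u : Fin (n+2) → K := fun k => U k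
  set e := tridiag n b *ᵥ u - σ • u - r
  have he (k : Fin (n+1)) : e k.castSucc = 0 := by
    cases k using Fin.cases with
    | zero =>
      have hb₀ := hb 0
      simp only [e, Pi.sub_apply, Pi.smul_apply, smul_eq_mul, Fin.castSucc_zero,
        tridiag_mulVec_zero, u, U, Fin.val_one, Fin.val_zero, forwardSolve, hB 0 (by omega),
        hR 0 (by omega), Fin.zero_eta]
      field_simp
      ring
    | succ j =>
      have hb_succ := hb j.succ
      simp only [e, Pi.sub_apply, Pi.smul_apply, smul_eq_mul, tridiag_mulVec_succ_castSucc, u, U,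
        Fin.val_succ, Fin.val_castSucc, forwardSolve]
      rw [show Function.extend Fin.val b 0 (j + 1) = b j.succ from hB _ (by omega),
        show Function.extend Fin.val b 0 j = b j.castSucc from hB _ (by omega),
        show Function.extend Fin.val r 0 (j + 1) = r j.succ.castSucc from hR _ (by omega)]
      field_simp
      ring
  -- The last row is not imposed: it holds because `v` is also a left eigenvector.
  have he_dot : v ⬝ᵥ e = 0 := by
    rw [dotProduct_sub, dotProduct_sub, dotProduct_mulVec, ← tridiag_transpose, vecMul_transpose,
      hv, hr, dotProduct_smul, smul_dotProduct, sub_self, sub_zero]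
  have he_last : e (Fin.last _) = 0 := by
    rw [dotProduct, Fin.sum_univ_castSucc] at he_dot
    simpa [he, hv_last] using he_dot
  refine ⟨u, sub_eq_zero.1 (funext fun k => ?_)⟩
  cases k using Fin.lastCases with
  | last => exact he_last
  | cast k => exact he k

end ForwardSolve

section CollatzWielandt

noncomputable def supEigenvalue {ι : Type*} [Fintype ι] (M : Matrix ι ι ℝ) : ℝ :=
  sSup {μ : ℝ | ∃ x : ι → ℝ, x ≠ 0 ∧ M *ᵥ x = μ • x}

variable {ι : Type*} [Fintype ι]

theorem supEigenvalue_le_of_mulVec_le {M : Matrix ι ι ℝ} {w : ι → ℝ} {c : ℝ}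
    (hM : ∀ i j, 0 ≤ M i j) (hw : ∀ i, 0 < w i) (hc : 0 ≤ c)
    (hMw : ∀ i, (M *ᵥ w) i ≤ c * w i) : supEigenvalue M ≤ c := by
  refine Real.sSup_le ?_ hc
  rintro μ ⟨x, hx, hμ⟩
  obtain ⟨i₀, hi₀⟩ := Function.ne_iff.mp hx
  have : Nonempty ι := ⟨i₀⟩
  obtain ⟨j, hj⟩ := Finite.exists_max fun k => |x k| / w k
  set ρ := |x j| / w j
  have hx_le (k : ι) : |x k| ≤ ρ * w k := (div_le_iff₀ (hw k)).mp (hj k)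
  have hρ : 0 < ρ := (div_pos (abs_pos.mpr hi₀) (hw i₀)).trans_le (hj i₀)
  have hxj : ρ * w j = |x j| := div_mul_cancel₀ _ (hw j).ne'
  have key : |μ| * (ρ * w j) ≤ c * (ρ * w j) := calc
    |μ| * (ρ * w j) = |(M *ᵥ x) j| := by rw [hμ, hxj, Pi.smul_apply, smul_eq_mul, abs_mul]
    _ ≤ ∑ k, M j k * |x k| := by
      refine (Finset.abs_sum_le_sum_abs _ _).trans_eq (Finset.sum_congr rfl fun k _ => ?_)
      rw [abs_mul, abs_of_nonneg (hM j k)]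
    _ ≤ ∑ k, M j k * (ρ * w k) :=
      Finset.sum_le_sum fun k _ => mul_le_mul_of_nonneg_left (hx_le k) (hM j k)
    _ = ρ * (M *ᵥ w) j := by
      simp only [mulVec, dotProduct, Finset.mul_sum]
      exact Finset.sum_congr rfl fun k _ => by ring
    _ ≤ ρ * (c * w j) := mul_le_mul_of_nonneg_left (hMw j) hρ.le
    _ = c * (ρ * w j) := by ring
  exact (le_abs_self μ).trans (le_of_mul_le_mul_right key (mul_pos hρ (hw j)))

theorem exists_le_mulVec_of_le_supEigenvalue [Nonempty ι] {M : Matrix ι ι ℝ} {w : ι → ℝ} {s : ℝ}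
    (hM : ∀ i j, 0 ≤ M i j) (hw : ∀ i, 0 < w i) (hs : s ≤ supEigenvalue M) :
    ∃ i, s * w i ≤ (M *ᵥ w) i := by
  by_contra! h
  obtain ⟨j, hj⟩ := Finite.exists_max fun i => (M *ᵥ w) i / w i
  have hc : 0 ≤ (M *ᵥ w) j / w j :=
    div_nonneg (Finset.sum_nonneg fun k _ => mul_nonneg (hM j k) (hw k).le) (hw j).le
  have hle := supEigenvalue_le_of_mulVec_le hM hw hc fun i => (div_le_iff₀ (hw i)).mp (hj i)
  have hlt : (M *ᵥ w) j / w j < s := (div_lt_iff₀ (hw j)).mpr (h j)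
  linarith

/-- `d` plays the role of the derivative at `0` of the Perron root of `M t`, which is not assumed
to exist: the hypothesis on `u` is the first-order eigenvalue equation. -/
theorem nonneg_of_eventually_le_supEigenvalue [Nonempty ι] {M : ℝ → Matrix ι ι ℝ}
    {M' : Matrix ι ι ℝ} {v u : ι → ℝ} {σ d : ℝ}
    (hM : ∀ i j, HasDerivAt (fun t => M t i j) (M' i j) 0)
    (hM_nonneg : ∀ᶠ t in 𝓝[>] 0, ∀ i j, 0 ≤ M t i j)
    (hσ : ∀ᶠ t in 𝓝[>] 0, σ ≤ supEigenvalue (M t))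
    (hv : ∀ i, 0 < v i) (hMv : M 0 *ᵥ v = σ • v)
    (hu : M' *ᵥ v + M 0 *ᵥ u = d • v + σ • u) : 0 ≤ d := by
  by_contra! hd
  set w : ℝ → ι → ℝ := fun t => v + t • u
  set g : ι → ℝ → ℝ := fun i t => (M t *ᵥ w t) i - (σ + t * d) * w t i
  have hw (j : ι) : HasDerivAt (fun t => w t j) (u j) 0 :=
    (((hasDerivAt_id' 0).mul_const (u j)).const_add (v j)).congr_deriv (one_mul _)
  have hg (i : ι) : HasDerivAt (g i) 0 0 := by
    have hMw : HasDerivAt (fun t => (M t *ᵥ w t) i) ((M' *ᵥ v) i + (M 0 *ᵥ u) i) 0 := by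
      have := HasDerivAt.fun_sum (u := Finset.univ) fun j _ => (hM i j).mul (hw j)
      simpa [mulVec, dotProduct, w, Finset.sum_add_distrib] using this
    have hσw : HasDerivAt (fun t => (σ + t * d) * w t i) (d * v i + σ * u i) 0 := by
      refine ((((hasDerivAt_id' 0).mul_const d).const_add σ).fun_mul (hw i)).congr_deriv ?_
      simp [w]
    refine (hMw.sub hσw).congr_deriv ?_
    have := congrFun hu i
    simp only [Pi.add_apply, Pi.smul_apply, smul_eq_mul] at this
    linarith
  have hg_small (i : ι) : ∀ᶠ t in 𝓝 0, |g i t| ≤ -d * v i / 4 * |t| := by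
    have hg0 : g i 0 = 0 := by simp [g, w, hMv]
    filter_upwards [(hg i).isLittleO.def (div_pos (mul_pos (neg_pos.2 hd) (hv i)) four_pos)]
      with t ht
    simpa [hg0] using ht
  have hw_big (i : ι) : ∀ᶠ t in 𝓝 0, v i / 2 < w t i :=
    (hw i).continuousAt.tendsto.eventually_const_lt (by simpa [w] using half_lt_self (hv i))
  obtain ⟨t, ht, hMt, hσt, hgt, hwt⟩ :=
    (eventually_mem_nhdsWithin.and <| hM_nonneg.and <| hσ.and <|
      ((eventually_all.2 hg_small).and (eventually_all.2 hw_big)).filter_mono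
        nhdsWithin_le_nhds).exists
  have ht : 0 < t := ht
  obtain ⟨i, hi⟩ := exists_le_mulVec_of_le_supEigenvalue hMt
    (fun i => (half_pos (hv i)).trans (hwt i)) hσt
  have h_lower : -d * t * w t i ≤ g i t := by simp only [g]; linarith
  have h_upper : g i t ≤ -d * t * (v i / 4) := by
    have := (le_abs_self _).trans (hgt i)
    rwa [abs_of_pos ht, show -d * v i / 4 * t = -d * t * (v i / 4) by ring] at this
  have h_mono := mul_lt_mul_of_pos_left (hwt i) (mul_pos (neg_pos.2 hd) ht)
  linarith [mul_pos (mul_pos (neg_pos.2 hd) ht) (hv i)]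

end CollatzWielandt

noncomputable def perronWeight {n : ℕ} (l : Fin (n+1) → ℝ) (v : Fin (n+2) → ℝ) (i : Fin (n+1)) :
    ℝ :=
  v i.castSucc * v i.succ * l i ^ (-(3/2) : ℝ)

theorem Bmat_eq_tridiag (n : ℕ) (l : Fin (n+1) → ℝ) :
    Bmat n l = tridiag n (fun j => l j ^ (-(1/2) : ℝ)) := rfl

theorem Feasible.add_smul {n : ℕ} {l δ : Fin (n+1) → ℝ} {t : ℝ} (hl : Feasible n l)
    (hpos : ∀ j, 0 < l j + t * δ j) (ht : 0 ≤ t) (hδ : ∑ j, δ j ≤ 0) :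
    Feasible n (l + t • δ) := by
  refine ⟨hpos, le_trans ?_ hl.2⟩
  gcongr ?_ / _
  simp only [Pi.add_apply, Pi.smul_apply, smul_eq_mul, Finset.sum_add_distrib, ← Finset.mul_sum]
  linarith [mul_nonpos_of_nonneg_of_nonpos ht hδ]

theorem IsMinimizer.sum_mul_perronWeight_nonpos {n : ℕ} {l : Fin (n+1) → ℝ}
    {v : Fin (n+2) → ℝ} (hmin : IsMinimizer n l) (hv : IsPerronVector n l v)
    {δ : Fin (n+1) → ℝ} (hδ : ∑ j, δ j ≤ 0) :
    ∑ j, δ j * perronWeight l v j ≤ 0 := by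
  obtain ⟨hl, hl_min⟩ := hmin
  obtain ⟨hv_pos, hv_norm, hv_eig⟩ := hv
  set c : Fin (n+1) → ℝ := fun j => -(δ j * l j ^ (-(3/2) : ℝ)) / 2
  set d := v ⬝ᵥ tridiag n c *ᵥ v
  have hd : d = -∑ j, δ j * perronWeight l v j := by
    rw [show d = _ from dotProduct_tridiag_mulVec c v v, ← Finset.sum_neg_distrib]
    exact Finset.sum_congr rfl fun j _ => by simp only [c, perronWeight]; ring
  have hvv : v ⬝ᵥ v = 1 := by simpa [dotProduct, sq] using hv_norm
  obtain ⟨u, hu⟩ := exists_tridiag_mulVec_sub_smul_eq (r := d • v - tridiag n c *ᵥ v)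
    (fun j => (rpow_pos_of_pos (hl.1 j) _).ne') hv_eig (hv_pos _).ne'
    (by rw [dotProduct_sub, dotProduct_smul, hvv, smul_eq_mul, mul_one, sub_self])
  have hpos : ∀ᶠ t in 𝓝 (0 : ℝ), ∀ j, 0 < l j + t * δ j :=
    eventually_all.2 fun j => ((continuous_const.add (continuous_id.mul continuous_const)).tendsto'
      0 (l j) (by simp)).eventually_const_lt (hl.1 j)
  have hb (j : Fin (n+1)) : HasDerivAt (fun t : ℝ => (l + t • δ) j ^ (-(1/2) : ℝ)) (c j) 0 := by
    refine ((((hasDerivAt_id' 0).mul_const (δ j)).const_add (l j)).rpow_const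
      (Or.inl (by simpa using (hl.1 j).ne'))).congr_deriv ?_
    norm_num [c]
    ring
  have hσ : ∀ᶠ t in 𝓝[>] (0 : ℝ), sigmaB n l ≤ supEigenvalue (Bmat n (l + t • δ)) := by
    filter_upwards [eventually_mem_nhdsWithin, hpos.filter_mono nhdsWithin_le_nhds] with t ht hlt
    exact hl_min _ (hl.add_smul hlt (le_of_lt ht) hδ)
  have := nonneg_of_eventually_le_supEigenvalue (M := fun t => Bmat n (l + t • δ)) (u := u)
    (d := d) (hasDerivAt_tridiag_apply hb)
    ((hpos.filter_mono nhdsWithin_le_nhds).mono fun t ht =>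
      tridiag_nonneg fun j => (rpow_pos_of_pos (ht j) _).le) hσ hv_pos
    (by simpa using hv_eig)
    (by rw [zero_smul, add_zero, Bmat_eq_tridiag]; linear_combination (norm := module) hu)
  linarith

theorem IsMinimizer.perronWeight_eq {n : ℕ} {l : Fin (n+1) → ℝ} {v : Fin (n+2) → ℝ}
    (hmin : IsMinimizer n l) (hv : IsPerronVector n l v) (i j : Fin (n+1)) :
    perronWeight l v i = perronWeight l v j := by
  have key (i j : Fin (n+1)) : perronWeight l v i ≤ perronWeight l v j := by
    have h := hmin.sum_mul_perronWeight_nonpos hv (δ := Pi.single i 1 - Pi.single j 1) (by simp)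
    simpa [sub_mul, Finset.sum_sub_distrib, Pi.single_apply] using h
  exact le_antisymm (key i j) (key j i)

theorem IsPerronVector.perronWeight_zero {n : ℕ} {l : Fin (n+1) → ℝ} {v : Fin (n+2) → ℝ}
    (hv : IsPerronVector n l v) (hl : 0 < l 0) :
    perronWeight l v 0 = sigmaB n l * v 0 ^ 2 / l 0 := by
  have hrow : l 0 ^ (-(1/2) : ℝ) * v 1 = sigmaB n l * v 0 := by
    simpa [Bmat_eq_tridiag, tridiag_mulVec_zero] using congrFun hv.2.2 0
  rw [perronWeight, Fin.castSucc_zero, Fin.succ_zero_eq_one,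
    show (-(3/2) : ℝ) = -(1/2) - 1 by norm_num, rpow_sub_one hl.ne']
  field_simp
  linear_combination v 0 * hrow

theorem stmt_4_general (n : ℕ) (l : Fin (n+1) → ℝ)
    (hmin : IsMinimizer n l) (v : Fin (n+2) → ℝ)
    (hv : IsPerronVector n l v) :
    ∀ i : Fin (n+1),
      v i.castSucc * v i.succ * l i ^ (-(3/2) : ℝ)
        = sigmaB n l * v 0 ^ 2 / l 0 :=
  fun i => (hmin.perronWeight_eq hv i 0).trans (hv.perronWeight_zero (hmin.1.1 0))

/-- at the minimizer, the quantities `μ_i = v̄_{i+1} v̄_{i+2} λ̄_i^{-3/2}`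
are all equal, with common value `σ̄ v̄_1² / λ̄_0` (here 0-based indexing of `v̄`). -/
theorem stmt_4 (n : ℕ) (hn : 1 ≤ n) (l : Fin (n+1) → ℝ)
    (hmin : IsMinimizer n l) (v : Fin (n+2) → ℝ)
    (hv : IsPerronVector n l v) :
    ∀ i : Fin (n+1),
      v i.castSucc * v i.succ * l i ^ (-(3/2) : ℝ)
        = sigmaB n l * v 0 ^ 2 / l 0 :=
  stmt_4_general n l hmin v hv
end

section
/- Let n ∈ ℕ with n ≥ 1, let λ ∈ ℝ^{n+1} have all positive entries, let σ > 0, and let v = (v_1,…,v_{n+2}) ∈ ℝ^{n+2} have all entries positive, Euclidean norm 1, and satisfy B(λ) v = σ v. Suppose the quantities v_{i+1} v_{i+2} λ_i^{−3/2}, i = 0,…,n, are all equal. Set v_0 := 0, v_{n+3} := 0, a_i := (v_i/v_1)^{2/3} for i = 0,…,n+3, and r := σ^{2/3} λ_0^{1/3}. Then a_0 = 0, a_1 = 1, a_2 = r, a_{n+3} = 0, and a_{i−1} + a_{i+1} = r a_i² for all i = 1,…,n+2. -/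
/-!
Put `x_k := v_k^{1/3}`, so that `a_k = (x_k / x_1)^2`, and let `b_k := λ_{k-1}^{-1/2}` be the entry
of `B(λ)` linking `v_k` and `v_{k+1}`. The hypothesis says that `(b_k x_k x_{k+1})^3` does not depend
on `k`, hence neither does `m := b_k x_k x_{k+1}`. Multiplying the `k`-th row
`b_{k-1} x_{k-1}^3 + b_k x_{k+1}^3 = σ x_k^3` of `B(λ) v = σ v` by `x_k` therefore gives the
polynomial identity `m (x_{k-1}^2 + x_{k+1}^2) = σ x_k^4`; dividing it by its instance at `k = 1`
yields `a_{k-1} + a_{k+1} = a_2 a_k^2`. Finally the first row says `v_2 / v_1 = σ λ_0^{1/2}`, so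
`a_2 = σ^{2/3} λ_0^{1/3} = r`.
-/

open Real

lemma rpow_neg_half_pow_three {y : ℝ} (hy : 0 ≤ y) :
    (y ^ (-(1/2) : ℝ)) ^ 3 = y ^ (-(3/2) : ℝ) := by
  rw [← Real.rpow_natCast, ← Real.rpow_mul hy]
  norm_num

lemma rpow_one_third_pow_three {y : ℝ} (hy : 0 ≤ y) : (y ^ (1/3 : ℝ)) ^ 3 = y := by
  rw [← Real.rpow_natCast, ← Real.rpow_mul hy]
  norm_num

lemma div_rpow_two_thirds {y z : ℝ} (hy : 0 ≤ y) (hz : 0 ≤ z) :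
    (y / z) ^ ((2:ℝ)/3) = (y ^ (1/3 : ℝ) / z ^ (1/3 : ℝ)) ^ 2 := by
  rw [← Real.div_rpow hy hz, ← Real.rpow_natCast, ← Real.rpow_mul (div_nonneg hy hz)]
  norm_num

lemma sq_recurrence_of_cube_recurrence {b x : ℕ → ℝ} {m σ : ℝ} {N : ℕ}
    (h0 : x 0 = 0) (hTop : x (N+2) = 0)
    (hprod : ∀ k, 1 ≤ k → k ≤ N → b k * x k * x (k+1) = m)
    (hrow : ∀ k ≤ N, b k * x k ^ 3 + b (k+1) * x (k+2) ^ 3 = σ * x (k+1) ^ 3)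
    {k : ℕ} (hk : k ≤ N) :
    m * (x k ^ 2 + x (k+2) ^ 2) = σ * x (k+1) ^ 4 := by
  have hleft : b k * x k ^ 3 * x (k+1) = m * x k ^ 2 := by
    rcases Nat.eq_zero_or_pos k with rfl | hk1
    · simp [h0]
    · rw [← hprod k hk1 hk]
      ring
  have hright : b (k+1) * x (k+2) ^ 3 * x (k+1) = m * x (k+2) ^ 2 := by
    rcases Nat.lt_or_ge k N with hkN | hkN
    · rw [← hprod (k+1) (by omega) hkN]
      ring
    · simp [show k = N by omega, hTop]
  linear_combination x (k+1) * hrow k hk - hleft - hright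

lemma div_sq_recurrence_of_sq_recurrence {x : ℕ → ℝ} {m σ : ℝ} {N : ℕ}
    (h0 : x 0 = 0) (hx1 : x 1 ≠ 0) (hm : m ≠ 0)
    (hrec : ∀ k ≤ N, m * (x k ^ 2 + x (k+2) ^ 2) = σ * x (k+1) ^ 4) {k : ℕ} (hk : k ≤ N) :
    (x k / x 1) ^ 2 + (x (k+2) / x 1) ^ 2 = (x 2 / x 1) ^ 2 * ((x (k+1) / x 1) ^ 2) ^ 2 := by
  have h1 : m * x 2 ^ 2 = σ * x 1 ^ 4 := by simpa [h0] using hrec 0 (Nat.zero_le N)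
  have key : m * ((x k ^ 2 + x (k+2) ^ 2) * x 1 ^ 4) = m * (x 2 ^ 2 * x (k+1) ^ 4) := by
    linear_combination x 1 ^ 4 * hrec k hk - x (k+1) ^ 4 * h1
  field_simp
  linear_combination mul_left_cancel₀ hm key

/-- `coupling n l k = λ_{k-1}^{-1/2}` is the entry of `B(λ)` linking the coordinates `k` and `k+1`
of the extended vector `(v_0, …, v_{n+3})`; it is meaningful for `1 ≤ k ≤ n+1` only (elsewhere the
index wraps around modulo `n+1`). -/
noncomputable def coupling (n : ℕ) (l : Fin (n+1) → ℝ) (k : ℕ) : ℝ :=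
  l (Fin.ofNat (n+1) (k - 1)) ^ (-(1/2) : ℝ)

lemma coupling_succ {n : ℕ} (l : Fin (n+1) → ℝ) (i : Fin (n+1)) :
    coupling n l (i+1) = l i ^ (-(1/2) : ℝ) := by
  simp [coupling]

lemma coupling_one {n : ℕ} (l : Fin (n+1) → ℝ) : coupling n l 1 = l 0 ^ (-(1/2) : ℝ) :=
  coupling_succ l 0

section Extension

variable {n : ℕ} {l : Fin (n+1) → ℝ} {v : Fin (n+2) → ℝ} {w : ℕ → ℝ}

lemma extension_pos (hw : ∀ j : Fin (n+2), w (j+1) = v j) (hv : ∀ i, 0 < v i) {k : ℕ}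
    (h1 : 1 ≤ k) (h2 : k ≤ n+2) : 0 < w k := by
  obtain ⟨j, rfl⟩ : ∃ j : Fin (n+2), k = j + 1 := ⟨⟨k-1, by omega⟩, by simp; omega⟩
  rw [hw]
  exact hv j

lemma extension_nonneg (hw0 : w 0 = 0) (hwTop : w (n+3) = 0)
    (hw : ∀ j : Fin (n+2), w (j+1) = v j) (hv : ∀ i, 0 < v i) {k : ℕ} (hk : k ≤ n+3) :
    0 ≤ w k := by
  rcases Nat.eq_zero_or_pos k with rfl | h1
  · exact hw0.ge
  rcases Nat.lt_or_ge k (n+3) with h2 | h2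
  · exact (extension_pos hw hv h1 (by omega)).le
  · rw [show k = n+3 by omega, hwTop]

lemma Bmat_mulVec_apply (hw0 : w 0 = 0) (hwTop : w (n+3) = 0)
    (hw : ∀ j : Fin (n+2), w (j+1) = v j) (j : Fin (n+2)) :
    (Bmat n l).mulVec v j = coupling n l j * w j + coupling n l (j+1) * w (j+2) := by
  -- for `j = 0` the truncated index `j - 1 = 0` is harmless, the summand being `_ * w 0 = 0`
  have hentry : ∀ i : Fin (n+2), Bmat n l j i * v i =
      (if (i : ℕ) = j - 1 then coupling n l j * w j else 0) +
        (if (i : ℕ) = j + 1 then coupling n l (j+1) * w (j+2) else 0) := by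
    intro i
    simp only [Bmat, Matrix.of_apply]
    by_cases hup : (i : ℕ) = j + 1
    · rw [dif_pos hup.symm, if_neg (by omega), if_pos hup, ← coupling_succ l ⟨j, by omega⟩,
        ← hw i, hup]
      ring
    by_cases hdown : (i : ℕ) + 1 = j
    · rw [dif_neg (Ne.symm hup), dif_pos hdown, if_pos (by omega), if_neg hup,
        ← coupling_succ l ⟨i, by omega⟩, ← hw i, hdown]
      ring
    rw [dif_neg (Ne.symm hup), dif_neg hdown, if_neg hup]
    split_ifs with hj
    · rw [show (j : ℕ) = 0 by omega, hw0]
      ring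
    · ring
  have hsum : ∀ (k : ℕ) (c : ℝ), (∑ i : Fin (n+2), if (i : ℕ) = k then c else 0) =
      if k < n+2 then c else 0 := fun k c => by
    rw [Fin.sum_univ_eq_sum_range (fun i => if i = k then c else 0), Finset.sum_ite_eq']
    simp only [Finset.mem_range]
  rw [Matrix.mulVec, dotProduct, Finset.sum_congr rfl (fun i _ => hentry i),
    Finset.sum_add_distrib, hsum, hsum, if_pos (by omega)]
  split_ifs with hj
  · rfl
  · rw [show (j : ℕ) + 2 = n + 3 by omega, hwTop]
    ring

lemma extension_eigen_row {σ : ℝ} (heig : (Bmat n l).mulVec v = σ • v) (hw0 : w 0 = 0)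
    (hwTop : w (n+3) = 0) (hw : ∀ j : Fin (n+2), w (j+1) = v j) {k : ℕ} (hk : k ≤ n+1) :
    coupling n l k * w k + coupling n l (k+1) * w (k+2) = σ * w (k+1) := by
  have h := congrFun heig ⟨k, by omega⟩
  rwa [Bmat_mulVec_apply hw0 hwTop hw, Pi.smul_apply, smul_eq_mul, ← hw] at h

lemma extension_two_div_one {σ : ℝ} (hl : ∀ i, 0 < l i) (hv : ∀ i, 0 < v i)
    (heig : (Bmat n l).mulVec v = σ • v) (hw0 : w 0 = 0) (hwTop : w (n+3) = 0)
    (hw : ∀ j : Fin (n+2), w (j+1) = v j) :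
    w 2 / w 1 = σ * l 0 ^ (1/2 : ℝ) := by
  have h := extension_eigen_row heig hw0 hwTop hw (Nat.zero_le _)
  have hsqrt : 0 < l 0 ^ (1/2 : ℝ) := Real.rpow_pos_of_pos (hl 0) _
  rw [hw0, mul_zero, zero_add, zero_add, coupling_one, Real.rpow_neg (hl 0).le, inv_mul_eq_iff_eq_mul₀ hsqrt.ne'] at h
  rw [h, div_eq_iff (extension_pos hw hv le_rfl (by omega)).ne']
  ring

lemma coupling_mul_rpow_mul_rpow_eq (hl : ∀ i, 0 < l i) (hv : ∀ i, 0 < v i)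
    (hw : ∀ j : Fin (n+2), w (j+1) = v j)
    (hmu : ∀ i j : Fin (n+1),
      v i.castSucc * v i.succ * l i ^ (-(3/2) : ℝ) = v j.castSucc * v j.succ * l j ^ (-(3/2) : ℝ))
    {k : ℕ} (h1 : 1 ≤ k) (h2 : k ≤ n+1) :
    coupling n l k * w k ^ (1/3 : ℝ) * w (k+1) ^ (1/3 : ℝ) =
      coupling n l 1 * w 1 ^ (1/3 : ℝ) * w 2 ^ (1/3 : ℝ) := by
  have hcube : ∀ i : Fin (n+1),
      (coupling n l (i+1) * w (i+1) ^ (1/3 : ℝ) * w (i+2) ^ (1/3 : ℝ)) ^ 3 =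
        v i.castSucc * v i.succ * l i ^ (-(3/2) : ℝ) := fun i => by
    rw [mul_pow, mul_pow, coupling_succ, rpow_neg_half_pow_three (hl i).le,
      rpow_one_third_pow_three (extension_pos hw hv (by omega) (by omega)).le,
      rpow_one_third_pow_three (extension_pos hw hv (by omega) (by omega)).le,
      ← hw i.castSucc, ← hw i.succ, Fin.val_castSucc, Fin.val_succ]
    ring
  obtain ⟨i, rfl⟩ : ∃ i : Fin (n+1), k = i + 1 := ⟨⟨k-1, by omega⟩, by simp; omega⟩
  apply (Odd.pow_inj (by decide : Odd 3)).1
  rw [hcube i, hmu i 0]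
  simpa using (hcube 0).symm

lemma coupling_mul_rpow_mul_rpow_pos (hl : ∀ i, 0 < l i) (hv : ∀ i, 0 < v i)
    (hw : ∀ j : Fin (n+2), w (j+1) = v j) {k : ℕ} (h1 : 1 ≤ k) (h2 : k ≤ n+1) :
    0 < coupling n l k * w k ^ (1/3 : ℝ) * w (k+1) ^ (1/3 : ℝ) := by
  have := Real.rpow_pos_of_pos (hl (Fin.ofNat (n+1) (k - 1))) (-(1/2))
  have := extension_pos hw hv h1 (by omega)
  have := extension_pos hw hv (k := k+1) (by omega) (by omega)
  unfold coupling
  positivity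

lemma rpow_one_third_sq_recurrence {σ : ℝ} (hl : ∀ i, 0 < l i) (hv : ∀ i, 0 < v i)
    (heig : (Bmat n l).mulVec v = σ • v)
    (hmu : ∀ i j : Fin (n+1),
      v i.castSucc * v i.succ * l i ^ (-(3/2) : ℝ) = v j.castSucc * v j.succ * l j ^ (-(3/2) : ℝ))
    (hw0 : w 0 = 0) (hwTop : w (n+3) = 0) (hw : ∀ j : Fin (n+2), w (j+1) = v j)
    {k : ℕ} (hk : k ≤ n+1) :
    coupling n l 1 * w 1 ^ (1/3 : ℝ) * w 2 ^ (1/3 : ℝ) *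
        ((w k ^ (1/3 : ℝ)) ^ 2 + (w (k+2) ^ (1/3 : ℝ)) ^ 2) = σ * (w (k+1) ^ (1/3 : ℝ)) ^ 4 := by
  have hw3 : ∀ k ≤ n+3, (w k ^ (1/3 : ℝ)) ^ 3 = w k := fun k hk =>
    rpow_one_third_pow_three (extension_nonneg hw0 hwTop hw hv hk)
  refine sq_recurrence_of_cube_recurrence (x := fun k => w k ^ (1/3 : ℝ)) (by simp [hw0])
    (by simp [hwTop]) (fun k h1 h2 => coupling_mul_rpow_mul_rpow_eq hl hv hw hmu h1 h2)
    (fun k hk => ?_) hk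
  rw [hw3 k (by omega), hw3 (k+1) (by omega), hw3 (k+2) (by omega)]
  exact extension_eigen_row heig hw0 hwTop hw hk

end Extension

theorem stmt_5_general (n : ℕ) (l : Fin (n+1) → ℝ)
    (hl : ∀ i, 0 < l i) (σ : ℝ) (hσ : 0 < σ)
    (v : Fin (n+2) → ℝ) (hv : ∀ i, 0 < v i)
    (heig : (Bmat n l).mulVec v = σ • v)
    (hmu : ∀ i j : Fin (n+1),
      v i.castSucc * v i.succ * l i ^ (-(3/2) : ℝ)
        = v j.castSucc * v j.succ * l j ^ (-(3/2) : ℝ))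
    (ve : ℕ → ℝ) (hve0 : ve 0 = 0) (hveTop : ve (n+3) = 0)
    (hve : ∀ j : Fin (n+2), ve ((j : ℕ) + 1) = v j)
    (a : ℕ → ℝ) (ha : ∀ i, i ≤ n+3 → a i = (ve i / ve 1) ^ ((2:ℝ)/3))
    (r : ℝ) (hr : r = σ ^ ((2:ℝ)/3) * l 0 ^ ((1:ℝ)/3)) :
    a 0 = 0 ∧ a 1 = 1 ∧ a 2 = r ∧ a (n+3) = 0 ∧
      ∀ i : ℕ, 1 ≤ i → i ≤ n+2 → a (i-1) + a (i+1) = r * a i ^ 2 := by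
  have hve_nonneg : ∀ k ≤ n+3, 0 ≤ ve k := fun k hk => extension_nonneg hve0 hveTop hve hv hk
  set x : ℕ → ℝ := fun k => ve k ^ (1/3 : ℝ)
  have hx1 : 0 < x 1 := Real.rpow_pos_of_pos (extension_pos hve hv le_rfl (by omega)) _
  have hx0 : x 0 = 0 := by simp [x, hve0]
  have ha_x : ∀ k ≤ n+3, a k = (x k / x 1) ^ 2 := fun k hk => by
    rw [ha k hk, div_rpow_two_thirds (hve_nonneg k hk) (hve_nonneg 1 (by omega))]
  have ha2 : a 2 = r := by
    rw [ha 2 (by omega), extension_two_div_one hl hv heig hve0 hveTop hve,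
      Real.mul_rpow hσ.le (Real.rpow_nonneg (hl 0).le _), ← Real.rpow_mul (hl 0).le, hr]
    norm_num
  refine ⟨by simp [ha_x 0 (by omega), hx0], by rw [ha_x 1 (by omega), div_self hx1.ne', one_pow],
    ha2, by simp [ha_x (n+3) le_rfl, x, hveTop], fun i h1 h2 => ?_⟩
  obtain ⟨k, rfl⟩ : ∃ k, i = k + 1 := ⟨i - 1, by omega⟩
  rw [Nat.add_sub_cancel, ← ha2, ha_x k (by omega), ha_x (k+1+1) (by omega),
    ha_x (k+1) (by omega), ha_x 2 (by omega)]
  exact div_sq_recurrence_of_sq_recurrence hx0 hx1.ne'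
    (coupling_mul_rpow_mul_rpow_pos hl hv hve le_rfl (by omega)).ne'
    (fun k hk => rpow_one_third_sq_recurrence hl hv heig hmu hve0 hveTop hve hk) (by omega)

/-- assuming the `μ_i` are all equal, the normalized quantities
`a_i = (v_i/v_1)^{2/3}` (1-based indexing, with `v_0 := 0`, `v_{n+3} := 0`) satisfy
`a_0 = 0`, `a_1 = 1`, `a_2 = r`, `a_{n+3} = 0` and the recursion
`a_{i-1} + a_{i+1} = r a_i²` with `r = σ^{2/3} λ_0^{1/3}`. -/
theorem stmt_5 (n : ℕ) (hn : 1 ≤ n) (l : Fin (n+1) → ℝ)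
    (hl : ∀ i, 0 < l i) (σ : ℝ) (hσ : 0 < σ)
    (v : Fin (n+2) → ℝ) (hv : ∀ i, 0 < v i) (hnorm : ∑ i, v i ^ 2 = 1)
    (heig : (Bmat n l).mulVec v = σ • v)
    (hmu : ∀ i j : Fin (n+1),
      v i.castSucc * v i.succ * l i ^ (-(3/2) : ℝ)
        = v j.castSucc * v j.succ * l j ^ (-(3/2) : ℝ))
    (ve : ℕ → ℝ) (hve0 : ve 0 = 0) (hveTop : ve (n+3) = 0)
    (hve : ∀ j : Fin (n+2), ve ((j : ℕ) + 1) = v j)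
    (a : ℕ → ℝ) (ha : ∀ i, i ≤ n+3 → a i = (ve i / ve 1) ^ ((2:ℝ)/3))
    (r : ℝ) (hr : r = σ ^ ((2:ℝ)/3) * l 0 ^ ((1:ℝ)/3)) :
    a 0 = 0 ∧ a 1 = 1 ∧ a 2 = r ∧ a (n+3) = 0 ∧
      ∀ i : ℕ, 1 ≤ i → i ≤ n+2 → a (i-1) + a (i+1) = r * a i ^ 2 :=
  stmt_5_general n l hl σ hσ v hv heig hmu ve hve0 hveTop hve a ha r hr
end

section
/- Let n ∈ ℕ with n ≥ 1, let λ ∈ ℝ^{n+1} have all positive entries, let σ > 0, and let v = (v_1,…,v_{n+2}) ∈ ℝ^{n+2} have all entries positive, Euclidean norm 1, and satisfy B(λ) v = σ v. Suppose the quantities v_{i+1} v_{i+2} λ_i^{−3/2}, i = 0,…,n, are all equal. Set a_i := (v_i/v_1)^{2/3} for i = 1,…,n+2. Then λ_i = (λ_0/σ)^{2/3} a_{i+1} a_{i+2} for all i = 0,…,n. -/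
open Real

/-! Row `0` of the eigenvalue equation reads `σ v₀ = λ₀^{-1/2} v₁`, so `λ₀^{1/2} σ = v₁ / v₀`.
Equality of the `μ_i` with `μ_0` gives `λ_i^{3/2} = λ₀^{3/2} v_i v_{i+1} / (v₀ v₁)`, and substituting
`λ₀^{1/2} = v₁ / (σ v₀)` turns this into `λ_i^{3/2} = (λ₀/σ) (v_i/v₀) (v_{i+1}/v₀)`; raise both
sides to the power `2/3`. -/

theorem Bmat_mulVec_apply_zero (n : ℕ) (l : Fin (n+1) → ℝ) (v : Fin (n+2) → ℝ) :
    (Bmat n l).mulVec v 0 = l 0 ^ (-(1/2) : ℝ) * v 1 := by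
  rw [Matrix.mulVec, dotProduct, Finset.sum_eq_single 1]
  · simp [Bmat]
  · intro j _ hj
    have hj' : 1 ≠ (j : ℕ) := fun h => hj (Fin.ext (by simp [← h]))
    simp [Bmat, hj']
  · simp

theorem rpow_three_halves_eq_of_mul_rpow_eq {l₀ l v₀ v₁ x y σ : ℝ} (hl₀ : 0 < l₀) (hl : 0 < l)
    (hv₀ : 0 < v₀) (hv₁ : 0 < v₁) (hσ : σ * v₀ = l₀ ^ (-(1/2) : ℝ) * v₁)
    (hμ : x * y * l ^ (-(3/2) : ℝ) = v₀ * v₁ * l₀ ^ (-(3/2) : ℝ)) :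
    l ^ (3/2 : ℝ) = l₀ / σ * (x / v₀ * (y / v₀)) := by
  have h₃ : l₀ ^ (3/2 : ℝ) = l₀ * l₀ ^ (1/2 : ℝ) := by
    rw [← rpow_one_add' hl₀.le (by norm_num)]; norm_num
  rw [rpow_neg hl₀.le] at hσ
  rw [rpow_neg hl.le, rpow_neg hl₀.le, h₃] at hμ
  have hs : 0 < l₀ ^ (1/2 : ℝ) := rpow_pos_of_pos hl₀ _
  have hL : 0 < l ^ (3/2 : ℝ) := rpow_pos_of_pos hl _
  generalize l₀ ^ (1/2 : ℝ) = s at *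
  generalize l ^ (3/2 : ℝ) = L at *
  obtain rfl : σ = v₁ / (s * v₀) := by field_simp at hσ ⊢; linarith
  field_simp at hμ ⊢
  linarith

theorem stmt_6_general (n : ℕ) (l : Fin (n+1) → ℝ)
    (hl : ∀ i, 0 < l i) (σ : ℝ) (hσ : 0 < σ)
    (v : Fin (n+2) → ℝ) (hv : ∀ i, 0 < v i)
    (heig : (Bmat n l).mulVec v = σ • v)
    (hmu : ∀ i j : Fin (n+1),
      v i.castSucc * v i.succ * l i ^ (-(3/2) : ℝ)
        = v j.castSucc * v j.succ * l j ^ (-(3/2) : ℝ))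
    (a : ℕ → ℝ)
    (ha : ∀ j : Fin (n+2), a ((j : ℕ) + 1) = (v j / v 0) ^ ((2:ℝ)/3)) :
    ∀ i : Fin (n+1),
      l i = (l 0 / σ) ^ ((2:ℝ)/3) * (a ((i : ℕ) + 1) * a ((i : ℕ) + 2)) := by
  intro i
  have hrow : σ * v 0 = l 0 ^ (-(1/2) : ℝ) * v 1 := by
    rw [← Bmat_mulVec_apply_zero, heig, Pi.smul_apply, smul_eq_mul]
  have h₃ : l i ^ (3/2 : ℝ) = l 0 / σ * (v i.castSucc / v 0 * (v i.succ / v 0)) :=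
    rpow_three_halves_eq_of_mul_rpow_eq (hl 0) (hl i) (hv 0) (hv 1) hrow (by simpa using hmu i 0)
  have ha₁ : a ((i : ℕ) + 1) = (v i.castSucc / v 0) ^ ((2:ℝ)/3) := by simpa using ha i.castSucc
  have ha₂ : a ((i : ℕ) + 2) = (v i.succ / v 0) ^ ((2:ℝ)/3) := by simpa using ha i.succ
  have hpos : ∀ j, 0 ≤ v j / v 0 := fun j => div_nonneg (hv j).le (hv 0).le
  rw [ha₁, ha₂, ← mul_rpow (hpos _) (hpos _), ← mul_rpow (div_nonneg (hl 0).le hσ.le)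
    (mul_nonneg (hpos _) (hpos _)), ← h₃, ← rpow_mul (hl i).le]
  norm_num

/-- assuming the `μ_i` are all equal,
`λ_i = (λ_0/σ)^{2/3} a_{i+1} a_{i+2}` where `a_i = (v_i/v_1)^{2/3}`
(1-based indexing of `v` and `a`). -/
theorem stmt_6 (n : ℕ) (hn : 1 ≤ n) (l : Fin (n+1) → ℝ)
    (hl : ∀ i, 0 < l i) (σ : ℝ) (hσ : 0 < σ)
    (v : Fin (n+2) → ℝ) (hv : ∀ i, 0 < v i) (hnorm : ∑ i, v i ^ 2 = 1)
    (heig : (Bmat n l).mulVec v = σ • v)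
    (hmu : ∀ i j : Fin (n+1),
      v i.castSucc * v i.succ * l i ^ (-(3/2) : ℝ)
        = v j.castSucc * v j.succ * l j ^ (-(3/2) : ℝ))
    (a : ℕ → ℝ)
    (ha : ∀ j : Fin (n+2), a ((j : ℕ) + 1) = (v j / v 0) ^ ((2:ℝ)/3)) :
    ∀ i : Fin (n+1),
      l i = (l 0 / σ) ^ ((2:ℝ)/3) * (a ((i : ℕ) + 1) * a ((i : ℕ) + 2)) :=
  stmt_6_general n l hl σ hσ v hv heig hmu a ha
end
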